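/- Let (Ω, 𝓕, P) be a probability space and H ≥ 1. Let λ_1, …, λ_H, λ'_1, …, λ'_H be square-integrable real random variables that are mutually independent, each with mean ψ, and let X_1, …, X_H be square-integrable real random variables such that (λ_1, …, λ_H, λ'_1, …, λ'_H) is independent of (X_1, …, X_H). Assume the X_h are identically distributed with mean m_A := E[X_1] and variance V := Var(X_1), and that Cov(X_h, X_k) = c_A for all h ≠ k. Then Cov(Σ_{h=1}^H λ_h X_h, Σ_{h=1}^H λ'_h X_h) = (V·H + c_A·H·(H−1))·ψ². (This is the covariance formula derived in the paper for the case of i.i.d. Gamma(ψ, 1)-distributed scores, where only the first moment E λ = ψ of the scores is used.) -/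

import Mathlib

open MeasureTheory ProbabilityTheory

/-- Covariance of two real-valued random variables: `Cov(X, Y) = E[XY] - E[X]·E[Y]`. -/
noncomputable def cov {Ω : Type*} [MeasurableSpace Ω] (P : Measure Ω) (X Y : Ω → ℝ) : ℝ :=
  (∫ ω, X ω * Y ω ∂P) - (∫ ω, X ω ∂P) * (∫ ω, Y ω ∂P)

lemma l2_mul_integrable {Ω : Type*} [MeasurableSpace Ω] {P : Measure Ω} {f g : Ω → ℝ}
    (hf : MemLp f 2 P) (hg : MemLp g 2 P) : Integrable (fun ω => f ω * g ω) P := by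
  have h := hg.smul (φ := f) hf (r := 1)
    (hpqr := ⟨by rw [inv_one]; exact ENNReal.inv_two_add_inv_two⟩)
  rw [memLp_one_iff_integrable] at h
  exact h

/-- Covariance formula for i.i.d. Gamma(ψ,1)-type scores: if the scores
λ_1, …, λ_H, λ'_1, …, λ'_H are mutually independent with common mean ψ and
independent of the masses X_1, …, X_H, then
`Cov(Σ λ_h X_h, Σ λ'_h X_h) = (V·H + c_A·H·(H−1))·ψ²`. -/
theorem covariance_sum_iid_scores
    {Ω : Type*} [MeasurableSpace Ω] (P : Measure Ω) [IsProbabilityMeasure P]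
    (H : ℕ) (hH : 1 ≤ H)
    (lam lam' X : Fin H → Ω → ℝ)
    (hlam : ∀ h, MemLp (lam h) 2 P) (hlam' : ∀ h, MemLp (lam' h) 2 P)
    (hX : ∀ h, MemLp (X h) 2 P)
    -- the scores λ_1, …, λ_H, λ'_1, …, λ'_H are mutually independent
    (hlamIndep : iIndepFun (Sum.elim lam lam' :
      Fin H ⊕ Fin H → Ω → ℝ) P)
    -- each score has mean ψ
    (ψ : ℝ)
    (hmean : ∀ h, (∫ ω, lam h ω ∂P) = ψ)
    (hmean' : ∀ h, (∫ ω, lam' h ω ∂P) = ψ)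
    -- the scores are independent of the masses
    (hindep : IndepFun
      (fun ω => (((fun h => lam h ω), (fun h => lam' h ω)) : (Fin H → ℝ) × (Fin H → ℝ)))
      (fun ω => ((fun h => X h ω) : Fin H → ℝ)) P)
    -- the masses are identically distributed
    (hid : ∀ h, IdentDistrib (X h) (X ⟨0, hH⟩) P P)
    (mA V cA : ℝ)
    (hmA : (∫ ω, X ⟨0, hH⟩ ω ∂P) = mA)
    (hV : cov P (X ⟨0, hH⟩) (X ⟨0, hH⟩) = V)
    (hcA : ∀ h k, h ≠ k → cov P (X h) (X k) = cA) :
    cov P (fun ω => ∑ h, lam h ω * X h ω) (fun ω => ∑ h, lam' h ω * X h ω) =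
      (V * H + cA * H * (H - 1)) * ψ ^ 2 := by
  -- basic integrability
  have hInt_lam : ∀ h, Integrable (lam h) P := fun h => (hlam h).integrable (by norm_num)
  have hInt_lam' : ∀ h, Integrable (lam' h) P := fun h => (hlam' h).integrable (by norm_num)
  have hInt_X : ∀ h, Integrable (X h) P := fun h => (hX h).integrable (by norm_num)
  have hInt_lX : ∀ h, Integrable (fun ω => lam h ω * X h ω) P :=
    fun h => l2_mul_integrable (hlam h) (hX h)
  have hInt_l'X : ∀ h, Integrable (fun ω => lam' h ω * X h ω) P :=
    fun h => l2_mul_integrable (hlam' h) (hX h)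
  have hInt_ll : ∀ h k, Integrable (fun ω => lam h ω * lam' k ω) P :=
    fun h k => l2_mul_integrable (hlam h) (hlam' k)
  have hInt_XX : ∀ h k, Integrable (fun ω => X h ω * X k ω) P :=
    fun h k => l2_mul_integrable (hX h) (hX k)
  -- independence of λ_h λ'_k and X_h X_k
  have hIndep_hk : ∀ h k, IndepFun (fun ω => lam h ω * lam' k ω)
      (fun ω => X h ω * X k ω) P := fun h k =>
    hindep.comp (φ := fun p : (Fin H → ℝ) × (Fin H → ℝ) => p.1 h * p.2 k)
      (ψ := fun v : Fin H → ℝ => v h * v k)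
      (((measurable_pi_apply h).comp measurable_fst).mul
        ((measurable_pi_apply k).comp measurable_snd))
      ((measurable_pi_apply h).mul (measurable_pi_apply k))
  have hIndep_lX : ∀ h, IndepFun (lam h) (X h) P := fun h =>
    hindep.comp (φ := fun p : (Fin H → ℝ) × (Fin H → ℝ) => p.1 h)
      (ψ := fun v : Fin H → ℝ => v h)
      ((measurable_pi_apply h).comp measurable_fst) (measurable_pi_apply h)
  have hIndep_l'X : ∀ h, IndepFun (lam' h) (X h) P := fun h =>
    hindep.comp (φ := fun p : (Fin H → ℝ) × (Fin H → ℝ) => p.2 h)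
      (ψ := fun v : Fin H → ℝ => v h)
      ((measurable_pi_apply h).comp measurable_snd) (measurable_pi_apply h)
  -- E[λ_h λ'_k] = ψ²
  have hEll : ∀ h k, (∫ ω, lam h ω * lam' k ω ∂P) = ψ ^ 2 := by
    intro h k
    have hind : IndepFun (lam h) (lam' k) P :=
      hlamIndep.indepFun (i := Sum.inl h) (j := Sum.inr k) (by simp)
    have := hind.integral_mul_eq_mul_integral (hInt_lam h).aestronglyMeasurable (hInt_lam' k).aestronglyMeasurable
    simpa [Pi.mul_apply, hmean h, hmean' k, sq] using this
  -- E[X_h] = mA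
  have hEX : ∀ h, (∫ ω, X h ω ∂P) = mA := fun h => by
    rw [(hid h).integral_eq, hmA]
  -- E[λ_h X_h] = ψ * mA
  have hElX : ∀ h, (∫ ω, lam h ω * X h ω ∂P) = ψ * mA := by
    intro h
    have := (hIndep_lX h).integral_mul_eq_mul_integral (hInt_lam h).aestronglyMeasurable (hInt_X h).aestronglyMeasurable
    simpa [Pi.mul_apply, hmean h, hEX h] using this
  have hEl'X : ∀ h, (∫ ω, lam' h ω * X h ω ∂P) = ψ * mA := by
    intro h
    have := (hIndep_l'X h).integral_mul_eq_mul_integral (hInt_lam' h).aestronglyMeasurable (hInt_X h).aestronglyMeasurable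
    simpa [Pi.mul_apply, hmean' h, hEX h] using this
  -- key cross moment
  have hprod_eq : ∀ h k, (fun ω => (lam h ω * X h ω) * (lam' k ω * X k ω)) =
      fun ω => (lam h ω * lam' k ω) * (X h ω * X k ω) := by
    intro h k; funext ω; ring
  have hInt_prod : ∀ h k, Integrable
      (fun ω => (lam h ω * X h ω) * (lam' k ω * X k ω)) P := by
    intro h k
    rw [hprod_eq]
    exact (hIndep_hk h k).integrable_mul (hInt_ll h k) (hInt_XX h k)
  have hkey : ∀ h k, (∫ ω, (lam h ω * X h ω) * (lam' k ω * X k ω) ∂P) =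
      ψ ^ 2 * (cov P (X h) (X k) + mA * mA) := by
    intro h k
    rw [hprod_eq]
    have := (hIndep_hk h k).integral_mul_eq_mul_integral (hInt_ll h k).aestronglyMeasurable (hInt_XX h k).aestronglyMeasurable
    have h2 : (∫ ω, (lam h ω * lam' k ω) * (X h ω * X k ω) ∂P) =
        ψ ^ 2 * (∫ ω, X h ω * X k ω ∂P) := by
      simpa [Pi.mul_apply, hEll h k] using this
    rw [h2]
    have : (∫ ω, X h ω * X k ω ∂P) = cov P (X h) (X k) + mA * mA := by
      simp [cov, hEX h, hEX k]
    rw [this]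
  -- covariance of diagonal terms
  have hVh : ∀ h, cov P (X h) (X h) = V := by
    intro h
    have hsq : (∫ ω, X h ω * X h ω ∂P) = ∫ ω, X ⟨0, hH⟩ ω * X ⟨0, hH⟩ ω ∂P :=
      ((hid h).comp (measurable_id.mul measurable_id)).integral_eq
    rw [← hV]
    simp only [cov, hsq, hEX h, hmA]
  -- sum of covariances
  have hsumcov : ∑ h : Fin H, ∑ k : Fin H, cov P (X h) (X k) =
      H * V + H * (H - 1) * cA := by
    have hrow : ∀ h : Fin H, ∑ k : Fin H, cov P (X h) (X k) = V + (H - 1) * cA := by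
      intro h
      rw [← Finset.add_sum_erase _ _ (Finset.mem_univ h), hVh h]
      congr 1
      rw [Finset.sum_congr rfl (fun k hk => hcA h k (Finset.ne_of_mem_erase hk).symm)]
      rw [Finset.sum_const, Finset.card_erase_of_mem (Finset.mem_univ h)]
      simp [Nat.cast_sub hH, mul_comm]
    rw [Finset.sum_congr rfl (fun h _ => hrow h)]
    simp [Finset.sum_const]
    ring
  -- expand the covariance of sums
  have hLHS : (∫ ω, (∑ h, lam h ω * X h ω) * (∑ k, lam' k ω * X k ω) ∂P) =
      ∑ h : Fin H, ∑ k : Fin H, ∫ ω, (lam h ω * X h ω) * (lam' k ω * X k ω) ∂P := by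
    have : (fun ω => (∑ h, lam h ω * X h ω) * (∑ k, lam' k ω * X k ω)) =
        fun ω => ∑ h : Fin H, ∑ k : Fin H, (lam h ω * X h ω) * (lam' k ω * X k ω) := by
      funext ω; rw [Finset.sum_mul_sum]
    rw [this, integral_finset_sum _ (fun h _ =>
      integrable_finset_sum _ (fun k _ => hInt_prod h k))]
    exact Finset.sum_congr rfl fun h _ =>
      integral_finset_sum _ fun k _ => hInt_prod h k
  have hE1 : (∫ ω, (∑ h, lam h ω * X h ω) ∂P) = H * (ψ * mA) := by
    rw [integral_finset_sum _ (fun h _ => hInt_lX h)]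
    simp [hElX, Finset.sum_const, mul_comm]
  have hE2 : (∫ ω, (∑ h, lam' h ω * X h ω) ∂P) = H * (ψ * mA) := by
    rw [integral_finset_sum _ (fun h _ => hInt_l'X h)]
    simp [hEl'X, Finset.sum_const, mul_comm]
  unfold cov
  rw [hLHS, hE1, hE2]
  have : ∑ h : Fin H, ∑ k : Fin H, (∫ ω, (lam h ω * X h ω) * (lam' k ω * X k ω) ∂P) =
      ∑ h : Fin H, ∑ k : Fin H, ψ ^ 2 * (cov P (X h) (X k) + mA * mA) :=
    Finset.sum_congr rfl fun h _ => Finset.sum_congr rfl fun k _ => hkey h k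
  rw [this]
  simp only [mul_add, Finset.sum_add_distrib, ← Finset.mul_sum, hsumcov,
    Finset.sum_const, Finset.card_univ, Fintype.card_fin, nsmul_eq_mul]
  ring
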